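/- For the open Toda lattice of dimension 2k+1 (k ≥ 1), both explicit bracket matrices define compatible Poisson structures: for every λ ∈ ℂ, the antisymmetric matrix of polynomials Π^{(λ)} := λΠ₁ + Π₂ satisfies the Jacobi (Schouten) identity, namely for all indices i, j, r ∈ {0, …, 2k} the polynomial identity Σ_{m=0}^{2k} ( Π^{(λ)}_{mi} · ∂Π^{(λ)}_{jr}/∂v_m + Π^{(λ)}_{mj} · ∂Π^{(λ)}_{ri}/∂v_m + Π^{(λ)}_{mr} · ∂Π^{(λ)}_{ij}/∂v_m ) = 0 holds in ℂ[v₀, …, v_{2k}]; the same identity also holds with Π^{(λ)} replaced by Π₁. -/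

import Mathlib

/-!
The Jacobiator `J(i, j, r) = ∑ₘ (Π_{mi} ∂ₘΠ_{jr} + Π_{mj} ∂ₘΠ_{ri} + Π_{mr} ∂ₘΠ_{ij})` of an
antisymmetric matrix with zero diagonal is alternating in `(i, j, r)`, so it suffices to treat
`i < j < r`. The pencil `λΠ₁ + Π₂` is banded (`Π_{ij} = 0` for `|i - j| > 2`) and `Π_{ij}` only
involves the variables `v_m` with `m` between `i` and `j`. This kills `J(i, j, r)` unless
`j - i, r - j ≤ 2`; in the remaining cases only the `m ∈ [i, r]` contribute, and what is left is a
finite number of polynomial identities, depending only on the parity of `i`. Finally `J` of the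
pencil is quadratic in `λ`, so its leading coefficient, the Jacobiator of `Π₁`, vanishes too.
-/

open Matrix MvPolynomial

noncomputable section

/-- The first Toda bracket matrix `Π₁` of the `(2k+1)`-dimensional open Toda
lattice, with polynomial entries. -/
def toda1 (k : ℕ) : Matrix (Fin (2 * k + 1)) (Fin (2 * k + 1))
    (MvPolynomial (Fin (2 * k + 1)) ℂ) :=
  Matrix.of fun i j =>
    if j.val = i.val + 1 then (if Even i.val then -X j else -X i)
    else if i.val = j.val + 1 then (if Even j.val then X i else X j)
    else 0

/-- The second Toda bracket matrix `Π₂` of the `(2k+1)`-dimensional open Toda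
lattice, with polynomial entries. -/
def toda2 (k : ℕ) : Matrix (Fin (2 * k + 1)) (Fin (2 * k + 1))
    (MvPolynomial (Fin (2 * k + 1)) ℂ) :=
  Matrix.of fun i j =>
    if j.val = i.val + 1 then -(X i * X j)
    else if i.val = j.val + 1 then X i * X j
    else if h : j.val = i.val + 2 then
      (if Even i.val then
        -2 * (X (⟨i.val + 1, by have := j.isLt; omega⟩ : Fin (2 * k + 1))) ^ 2
       else C (-(1/2) : ℂ) * (X i * X j))
    else if h' : i.val = j.val + 2 then
      (if Even j.val then
        2 * (X (⟨j.val + 1, by have := i.isLt; omega⟩ : Fin (2 * k + 1))) ^ 2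
       else C ((1/2) : ℂ) * (X i * X j))
    else 0


section Jacobiator

variable {σ R : Type*} [Fintype σ] [CommRing R]

def jacobiatorTerm (P : Matrix σ σ (MvPolynomial σ R)) (i j r m : σ) : MvPolynomial σ R :=
  P m i * pderiv m (P j r) + P m j * pderiv m (P r i) + P m r * pderiv m (P i j)

def jacobiator (P : Matrix σ σ (MvPolynomial σ R)) (i j r : σ) : MvPolynomial σ R :=
  ∑ m, jacobiatorTerm P i j r m

variable {P : Matrix σ σ (MvPolynomial σ R)}

theorem jacobiator_cycle (i j r : σ) : jacobiator P j r i = jacobiator P i j r :=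
  Finset.sum_congr rfl fun _ _ => by simp only [jacobiatorTerm]; ring

theorem jacobiator_swap_left (hP : ∀ i j, P j i = -P i j) (i j r : σ) :
    jacobiator P j i r = -jacobiator P i j r := by
  simp only [jacobiator, jacobiatorTerm, ← Finset.sum_neg_distrib, hP r i, hP j r, hP i j, map_neg]
  exact Finset.sum_congr rfl fun _ _ => by ring

theorem jacobiator_swap_right (hP : ∀ i j, P j i = -P i j) (i j r : σ) :
    jacobiator P i r j = -jacobiator P i j r := by
  rw [← jacobiator_cycle, jacobiator_swap_left hP, jacobiator_cycle]

theorem jacobiator_self (hP : ∀ i j, P j i = -P i j) (hdiag : ∀ i, P i i = 0) (i r : σ) :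
    jacobiator P i i r = 0 :=
  Finset.sum_eq_zero fun _ _ => by
    rw [jacobiatorTerm, hdiag, hP i r, map_neg, map_zero]; ring

theorem jacobiator_eq_zero_of_lt [LinearOrder σ] (hP : ∀ i j, P j i = -P i j)
    (hdiag : ∀ i, P i i = 0) (h : ∀ i j r, i < j → j < r → jacobiator P i j r = 0)
    (i j r : σ) : jacobiator P i j r = 0 := by
  have hswapl := jacobiator_swap_left hP
  have hswapr := jacobiator_swap_right hP
  have hself := jacobiator_self hP hdiag
  -- each `rw [← jacobiator_cycle]` rotates the goal `J a b c` to `J b c a`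
  rcases lt_trichotomy i j with hij | rfl | hji
  · rcases lt_trichotomy j r with hjr | rfl | hrj
    · exact h i j r hij hjr
    · rw [← jacobiator_cycle, hself]
    · rcases lt_trichotomy i r with hir | rfl | hri
      · rw [← neg_eq_zero, ← hswapr, h i r j hir hrj]
      · rw [← jacobiator_cycle, ← jacobiator_cycle, hself]
      · rw [← jacobiator_cycle, ← jacobiator_cycle, h r i j hri hij]
  · exact hself i r
  · rcases lt_trichotomy i r with hir | rfl | hri
    · rw [← neg_eq_zero, ← hswapl, h j i r hji hir]
    · rw [← jacobiator_cycle, ← jacobiator_cycle, hself]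
    · rcases lt_trichotomy j r with hjr | rfl | hrj
      · rw [← neg_eq_zero, ← hswapl, ← neg_eq_zero, ← hswapr, h j r i hjr hri]
      · rw [← jacobiator_cycle, hself]
      · rw [← neg_eq_zero, ← hswapl, ← jacobiator_cycle, ← jacobiator_cycle, h r j i hrj hji]

theorem jacobiator_eq_zero_of_forall_C_smul_add [IsDomain R] [CharZero R]
    {A B : Matrix σ σ (MvPolynomial σ R)} {i j r : σ}
    (h : ∀ c : R, jacobiator ((C c : MvPolynomial σ R) • A + B) i j r = 0) :
    jacobiator A i j r = 0 := by
  have key : 2 * jacobiator A i j r = jacobiator ((C 1 : MvPolynomial σ R) • A + B) i j r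
      + jacobiator ((C (-1) : MvPolynomial σ R) • A + B) i j r
      - 2 * jacobiator ((C 0 : MvPolynomial σ R) • A + B) i j r := by
    simp only [jacobiator, jacobiatorTerm, Finset.mul_sum, ← Finset.sum_add_distrib,
      ← Finset.sum_sub_distrib, Matrix.add_apply, Matrix.smul_apply, smul_eq_mul, map_add,
      pderiv_C_mul]
    simp only [map_one, map_neg, map_zero]
    exact Finset.sum_congr rfl fun _ _ => by ring
  rw [h, h, h] at key
  simpa using key

end Jacobiator

section Banded

variable {R : Type*} [CommRing R] {n : ℕ} {P : Matrix (Fin n) (Fin n) (MvPolynomial (Fin n) R)}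

theorem jacobiator_eq_zero_of_far {w : ℕ} (hP : ∀ i j, P j i = -P i j)
    (hband : ∀ i j : Fin n, (i : ℕ) + w < j → P i j = 0)
    (hloc : ∀ m i j, m ∉ Set.uIcc i j → pderiv m (P i j) = 0)
    {i j r : Fin n} (hij : i < j) (hjr : j < r) (hfar : (i : ℕ) + w < j ∨ (j : ℕ) + w < r) :
    jacobiator P i j r = 0 := by
  have hri : P r i = 0 := by rw [hP, hband i r (by omega), neg_zero]
  refine Finset.sum_eq_zero fun m _ => ?_
  rw [jacobiatorTerm, hri, map_zero, mul_zero, add_zero]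
  rcases hfar with hfar | hfar
  · rw [hband i j hfar, map_zero, mul_zero, add_zero]
    by_cases hm : m ∈ Set.uIcc j r
    · rw [Set.mem_uIcc] at hm
      rw [hP, hband i m (by omega), neg_zero, zero_mul]
    · rw [hloc m j r hm, mul_zero]
  · rw [hband j r hfar, map_zero, mul_zero, zero_add]
    by_cases hm : m ∈ Set.uIcc i j
    · rw [Set.mem_uIcc] at hm
      rw [hband m r (by omega), zero_mul]
    · rw [hloc m i j hm, mul_zero]

theorem jacobiator_eq_sum_window (hloc : ∀ m i j, m ∉ Set.uIcc i j → pderiv m (P i j) = 0)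
    {i j r : Fin n} {d : ℕ} (hij : i ≤ j) (hjr : j ≤ r) (hd : (r : ℕ) = i + d) :
    jacobiator P i j r = ∑ t : Fin (d + 1), jacobiatorTerm P i j r ⟨i + t, by omega⟩ := by
  refine (Fintype.sum_of_injective (fun t : Fin (d + 1) => (⟨i + t, by omega⟩ : Fin n))
    (fun s t hst => Fin.ext ?_) _ (jacobiatorTerm P i j r) (fun m hm => ?_) fun _ => rfl).symm
  · simpa using hst
  · have hm' : (m : ℕ) < i ∨ (r : ℕ) < m := by
      by_contra! h
      exact hm ⟨⟨m - i, by omega⟩, Fin.ext (by dsimp only; omega)⟩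
    rw [jacobiatorTerm, hloc m j r, hloc m r i, hloc m i j, mul_zero, mul_zero, mul_zero,
      add_zero, add_zero]
    all_goals rw [Set.mem_uIcc]; omega

end Banded

theorem Derivation.map_ofNat {R A M : Type*} [CommSemiring R] [CommSemiring A] [Algebra R A]
    [AddCommMonoid M] [Module A M] [Module R M] (D : Derivation R A M) (n : ℕ) [n.AtLeastTwo] :
    D (no_index (OfNat.ofNat n : A)) = 0 := by
  rw [← Nat.cast_ofNat]; exact D.map_natCast n

section Toda

variable {k : ℕ} {lam : ℂ}

def todaPencil (k : ℕ) (lam : ℂ) :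
    Matrix (Fin (2 * k + 1)) (Fin (2 * k + 1)) (MvPolynomial (Fin (2 * k + 1)) ℂ) :=
  (C lam : MvPolynomial (Fin (2 * k + 1)) ℂ) • toda1 k + toda2 k

theorem todaPencil_apply (i j : Fin (2 * k + 1)) :
    todaPencil k lam i j = C lam * toda1 k i j + toda2 k i j := rfl

theorem todaPencil_apply_swap (i j : Fin (2 * k + 1)) :
    todaPencil k lam j i = -todaPencil k lam i j := by
  simp only [todaPencil_apply, toda1, toda2, of_apply]
  split_ifs <;> first | omega | ring1 | (simp only [map_neg]; ring1)

theorem todaPencil_apply_self (i : Fin (2 * k + 1)) : todaPencil k lam i i = 0 := by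
  simp [todaPencil_apply, toda1, toda2]

theorem todaPencil_eq_zero {i j : Fin (2 * k + 1)} (h : (i : ℕ) + 2 < j) :
    todaPencil k lam i j = 0 := by
  simp only [todaPencil_apply, toda1, toda2, of_apply]
  split_ifs <;> first | omega | simp

theorem pderiv_todaPencil {m i j : Fin (2 * k + 1)} (hm : m ∉ Set.uIcc i j) :
    pderiv m (todaPencil k lam i j) = 0 := by
  simp only [Set.mem_uIcc, Fin.le_iff_val_le_val] at hm
  simp only [todaPencil_apply, toda1, toda2, of_apply]
  simp +contextual (disch := (simp only [ne_eq, Fin.ext_iff]; omega))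
    [apply_ite (pderiv m), apply_dite (pderiv m), Derivation.map_ofNat]

theorem jacobiator_todaPencil_of_near {i j r : Fin (2 * k + 1)} (hij : i < j) (hjr : j < r)
    (hj : (j : ℕ) ≤ i + 2) (hr : (r : ℕ) ≤ j + 2) : jacobiator (todaPencil k lam) i j r = 0 := by
  obtain ⟨a, ha⟩ := i; obtain ⟨b, hb⟩ := j; obtain ⟨c, hc⟩ := r
  obtain ⟨e, rfl⟩ := Nat.exists_eq_add_of_le (Fin.mk_lt_mk.mp hij).le
  obtain ⟨f, rfl⟩ := Nat.exists_eq_add_of_le (Fin.mk_lt_mk.mp hjr).le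
  rw [jacobiator_eq_sum_window (fun _ _ _ => pderiv_todaPencil) hij.le hjr.le (add_assoc a e f)]
  simp only [Fin.mk_lt_mk] at hij hjr hj hr
  obtain rfl | rfl : e = 1 ∨ e = 2 := (by omega) <;>
  obtain rfl | rfl : f = 1 ∨ f = 2 := (by omega) <;>
  by_cases hpar : Even a <;>
  -- `ring` cannot invert the `2` hidden in `C (1 / 2)`, so compare values at every point instead
  refine MvPolynomial.funext fun x => ?_ <;>
  simp [Fin.sum_univ_succ, jacobiatorTerm, todaPencil_apply, toda1, toda2, add_assoc,
    Nat.even_add_one, parity_simps, hpar, Pi.single_apply, Derivation.map_ofNat] <;>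
  ring

theorem jacobiator_todaPencil (lam : ℂ) (i j r : Fin (2 * k + 1)) :
    jacobiator (todaPencil k lam) i j r = 0 := by
  refine jacobiator_eq_zero_of_lt todaPencil_apply_swap todaPencil_apply_self
    (fun i j r hij hjr => ?_) i j r
  by_cases hnear : (j : ℕ) ≤ i + 2 ∧ (r : ℕ) ≤ j + 2
  · exact jacobiator_todaPencil_of_near hij hjr hnear.1 hnear.2
  · exact jacobiator_eq_zero_of_far todaPencil_apply_swap (fun _ _ => todaPencil_eq_zero)
      (fun _ _ _ => pderiv_todaPencil) hij hjr (by omega)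

end Toda

theorem toda_brackets_jacobi_general (k : ℕ) :
    (∀ (lam : ℂ) (i j r : Fin (2 * k + 1)),
        ∑ m : Fin (2 * k + 1),
          ((C lam * toda1 k m i + toda2 k m i)
              * pderiv m (C lam * toda1 k j r + toda2 k j r)
            + (C lam * toda1 k m j + toda2 k m j)
              * pderiv m (C lam * toda1 k r i + toda2 k r i)
            + (C lam * toda1 k m r + toda2 k m r)
              * pderiv m (C lam * toda1 k i j + toda2 k i j)) = 0) ∧
    (∀ i j r : Fin (2 * k + 1),
        ∑ m : Fin (2 * k + 1),
          (toda1 k m i * pderiv m (toda1 k j r)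
            + toda1 k m j * pderiv m (toda1 k r i)
            + toda1 k m r * pderiv m (toda1 k i j)) = 0) :=
  ⟨fun lam i j r => jacobiator_todaPencil lam i j r,
    fun i j r => jacobiator_eq_zero_of_forall_C_smul_add (B := toda2 k)
      fun lam => jacobiator_todaPencil lam i j r⟩

/-- the open Toda brackets are compatible Poisson structures:
`λΠ₁ + Π₂` satisfies the Schouten–Jacobi identity for every `λ`, and so does
`Π₁`. -/
theorem toda_brackets_jacobi (k : ℕ) (hk : 1 ≤ k) :
    (∀ (lam : ℂ) (i j r : Fin (2 * k + 1)),
        ∑ m : Fin (2 * k + 1),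
          ((C lam * toda1 k m i + toda2 k m i)
              * pderiv m (C lam * toda1 k j r + toda2 k j r)
            + (C lam * toda1 k m j + toda2 k m j)
              * pderiv m (C lam * toda1 k r i + toda2 k r i)
            + (C lam * toda1 k m r + toda2 k m r)
              * pderiv m (C lam * toda1 k i j + toda2 k i j)) = 0) ∧
    (∀ i j r : Fin (2 * k + 1),
        ∑ m : Fin (2 * k + 1),
          (toda1 k m i * pderiv m (toda1 k j r)
            + toda1 k m j * pderiv m (toda1 k r i)
            + toda1 k m r * pderiv m (toda1 k i j)) = 0) :=
  toda_brackets_jacobi_general k
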